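/- arXiv:0807.2626 — 5 statements merged into one kernel-verified Lean document; each statement's English description precedes it below -/
import Mathlib

section
/- For every complex number s with Re(s) > 1 and every complex α with |α| < 1, the Hurwitz-type series ∑_{n≥1} (n+α)^{-s} equals ζ(s) + ∑_{n≥1} ((-1)^n/n!) · s(s+1)⋯(s+n-1) · ζ(s+n) · α^n. -/
/-!
Expand every term binomially around the positive real `m + 1`:
`(m + 1 + α) ^ (-s) = ∑ₙ choose(-s, n) αⁿ (m + 1) ^ (-s - n)`.
The double series is absolutely convergent, being dominated termwise by the product of
`∑ₙ ‖choose(-s, n)‖ ‖α‖ⁿ` (convergent since the binomial series has radius `1`) and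
`∑ₘ (m + 1) ^ (-Re s)`. Hence the two summations may be interchanged, and summing over `m`
first turns `∑ₘ (m + 1) ^ (-s - n)` into `ζ(s + n)`.
-/

open Complex Finset

theorem Complex.ofReal_mul_cpow {r : ℝ} (hr : 0 < r) (z a : ℂ) :
    ((r : ℂ) * z) ^ a = (r : ℂ) ^ a * z ^ a := by
  rcases eq_or_ne z 0 with rfl | hz
  · rcases eq_or_ne a 0 with rfl | ha <;> simp [*]
  have hr' : (r : ℂ) ≠ 0 := ofReal_ne_zero.mpr hr.ne'
  rw [cpow_def_of_ne_zero (mul_ne_zero hr' hz), cpow_def_of_ne_zero hr', cpow_def_of_ne_zero hz,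
    log_ofReal_mul hr hz, ofReal_log hr.le, add_mul, exp_add]

theorem Ring.choose_neg_eq_prod {K : Type*} [Field K] [CharZero K] (a : K) (n : ℕ) :
    Ring.choose (-a) n = (-1) ^ n / n.factorial * ∏ i ∈ range n, (a + i) := by
  rw [Ring.choose_eq_smul, ← Polynomial.aeval_eq_smeval, ← Polynomial.eval_map_algebraMap,
    descPochhammer_map, descPochhammer_eval_eq_prod_range, smul_eq_mul]
  have hneg : ∏ i ∈ range n, (-a - i) = ∏ i ∈ range n, -(a + i) := by simp only [neg_add']
  rw [hneg, prod_neg, card_range]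
  ring

theorem summable_norm_choose_mul_pow {𝕂 : Type*} [RCLike 𝕂] (a : 𝕂) {r : ℝ} (hr₀ : 0 ≤ r)
    (hr : r < 1) : Summable fun n ↦ ‖Ring.choose a n‖ * r ^ n := by
  lift r to NNReal using hr₀
  have := (binomialSeries 𝕂 a).summable_norm_mul_pow
    (lt_of_lt_of_le (by exact_mod_cast hr) binomialSeries_radius_ge_one)
  simpa [binomialSeries, FormalMultilinearSeries.ofScalars_norm] using this

theorem hasSum_choose_mul_pow_mul_cpow {x : ℝ} (hx : 0 < x) {z : ℂ} (hz : ‖z‖ < x) (a : ℂ) :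
    HasSum (fun n ↦ Ring.choose a n * z ^ n * (x : ℂ) ^ (a - n)) (((x : ℂ) + z) ^ a) := by
  have hx' : (x : ℂ) ≠ 0 := ofReal_ne_zero.mpr hx.ne'
  have hzx : ‖z / x‖ < 1 := by
    rwa [norm_div, norm_real, Real.norm_of_nonneg hx.le, div_lt_one hx]
  have hbinom := (one_add_cpow_hasFPowerSeriesOnBall_zero (a := a)).hasSum
    (y := z / x) (by simpa [← ofReal_norm, enorm_eq_nnnorm] using hzx)
  simp only [zero_add, binomialSeries, FormalMultilinearSeries.ofScalars_apply_eq,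
    smul_eq_mul] at hbinom
  have hterm : (fun n ↦ Ring.choose a n * z ^ n * (x : ℂ) ^ (a - n)) =
      fun n ↦ (x : ℂ) ^ a * (Ring.choose a n * (z / x) ^ n) := by
    ext n
    rw [cpow_sub _ _ hx', cpow_natCast, div_pow]
    field_simp
  have hsum : ((x : ℂ) + z) ^ a = (x : ℂ) ^ a * (1 + z / x) ^ a := by
    rw [← ofReal_mul_cpow hx, mul_add, mul_one, mul_div_cancel₀ _ hx']
  rw [hterm, hsum]
  exact hbinom.mul_left _

theorem tsum_nat_add_one_cpow_neg {s : ℂ} (hs : 1 < s.re) :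
    ∑' m : ℕ, ((m : ℂ) + 1) ^ (-s) = riemannZeta s := by
  simp [zeta_eq_tsum_one_div_nat_add_one_cpow hs, cpow_neg]

theorem summable_norm_nat_add_one_cpow_neg {s : ℂ} (hs : 1 < s.re) :
    Summable fun m : ℕ ↦ ‖((m : ℂ) + 1) ^ (-s)‖ := by
  have := (summable_nat_add_iff 1).mpr (Complex.summable_one_div_nat_cpow.mpr hs)
  simpa [cpow_neg] using summable_norm_iff.mpr this

theorem summable_choose_mul_pow_mul_nat_add_one_cpow {s α : ℂ} (hs : 1 < s.re) (hα : ‖α‖ < 1) :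
    Summable (Function.uncurry fun n m : ℕ ↦
      Ring.choose (-s) n * α ^ n * ((m : ℂ) + 1) ^ (-s - n)) := by
  have hdom := (summable_norm_choose_mul_pow (-s) (norm_nonneg α) hα).mul_of_nonneg
    (summable_norm_nat_add_one_cpow_neg hs) (fun _ ↦ by positivity) (fun _ ↦ norm_nonneg _)
  refine hdom.of_norm_bounded fun ⟨n, m⟩ ↦ ?_
  have hle : ‖((m : ℂ) + 1) ^ (-s - n)‖ ≤ ‖((m : ℂ) + 1) ^ (-s)‖ := by
    exact_mod_cast norm_natCast_cpow_le_norm_natCast_cpow_of_pos m.succ_pos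
      (by simp : (-s - n).re ≤ (-s).re)
  simp only [Function.uncurry_apply_pair, norm_mul, norm_pow]
  gcongr

/-- For `Re s > 1` and `|α| < 1`, the Hurwitz-type series `∑_{n≥1} (n+α)^{-s}` equals
`ζ(s) + ∑_{n≥1} ((-1)^n/n!) s(s+1)⋯(s+n-1) ζ(s+n) α^n`. -/
theorem hurwitz_series_expansion (s α : ℂ) (hs : 1 < s.re) (hα : ‖α‖ < 1) :
    ∑' n : ℕ, ((n : ℂ) + 1 + α) ^ (-s) =
      riemannZeta s +
        ∑' n : ℕ, ((-1) ^ (n + 1) / ((n + 1).factorial : ℂ)) *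
          (∏ i ∈ Finset.range (n + 1), (s + i)) * riemannZeta (s + (n + 1)) * α ^ (n + 1) := by
  have hsum := summable_choose_mul_pow_mul_nat_add_one_cpow hs hα
  have hrow (m : ℕ) : ∑' n : ℕ, Ring.choose (-s) n * α ^ n * ((m : ℂ) + 1) ^ (-s - n) =
      ((m : ℂ) + 1 + α) ^ (-s) := by
    simpa using (hasSum_choose_mul_pow_mul_cpow (x := m + 1) (by positivity)
      (by linarith [m.cast_nonneg (α := ℝ)]) (-s)).tsum_eq
  have hcol (n : ℕ) : ∑' m : ℕ, Ring.choose (-s) n * α ^ n * ((m : ℂ) + 1) ^ (-s - n) =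
      Ring.choose (-s) n * α ^ n * riemannZeta (s + n) := by
    have hsn : 1 < (s + n).re := by
      rw [add_re, natCast_re]
      linarith [n.cast_nonneg (α := ℝ)]
    rw [tsum_mul_left, ← tsum_nat_add_one_cpow_neg hsn, neg_add']
  calc ∑' m : ℕ, ((m : ℂ) + 1 + α) ^ (-s)
      = ∑' (m : ℕ) (n : ℕ), Ring.choose (-s) n * α ^ n * ((m : ℂ) + 1) ^ (-s - n) :=
        tsum_congr fun m ↦ (hrow m).symm
    _ = ∑' n : ℕ, Ring.choose (-s) n * α ^ n * riemannZeta (s + n) := by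
        rw [hsum.tsum_comm]
        exact tsum_congr hcol
    _ = _ := by
        rw [(hsum.prod.congr hcol).tsum_eq_zero_add]
        congr 1
        · simp
        · refine tsum_congr fun n ↦ ?_
          rw [Ring.choose_neg_eq_prod]
          push_cast
          ring
end

section
/- For fixed integer k ≥ 1, fixed complex s with Re(s) > 1, and any β with 0 ≤ β < k, the power series ∑_{n≥0} b_{n,k}(s) α^n, where b_{n,k}(s) = ((-1)^n/n!) s(s+1)⋯(s+n-1) ζ_k(s+n) (with b_{0,k}(s) = ζ_k(s)), converges absolutely and satisfies the bound |∑_{n≥0} b_{n,k}(s) α^n| ≤ ζ(Re s) · (1 − β/k)^{-|s|} for all |α| ≤ β. -/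
open Complex Finset

/-- `ζ_k(s) = ∑_{n≥k} n^{-s}` for `Re s > 1`. -/
noncomputable def zetaShift (k : ℕ) (s : ℂ) : ℂ := ∑' n : ℕ, ((n : ℂ) + k) ^ (-s)

/-- The coefficients `b_{n,k}(s) = ((-1)^n/n!) s(s+1)⋯(s+n-1) ζ_k(s+n)`. -/
noncomputable def bCoeff (k : ℕ) (s : ℂ) (n : ℕ) : ℂ :=
  ((-1) ^ n / (n.factorial : ℂ)) * (∏ i ∈ Finset.range n, (s + i)) * zetaShift k (s + n)

/-!
Since `‖(m + k)^{-(s+n)}‖ ≤ k^{-n} (m + 1)^{-Re s}`, we get `|ζ_k(s+n)| ≤ k^{-n} ζ(Re s)`, and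
`|s(s+1)⋯(s+n-1)| ≤ |s|(|s|+1)⋯(|s|+n-1)`. Hence the series is dominated termwise by `ζ(Re s)`
times the binomial series `∑ (|s|)_n/n! (β/k)^n = (1 - β/k)^{-|s|}`.
-/

theorem ascPochhammer_eval_eq_prod_range {R : Type*} [CommSemiring R] (n : ℕ) (r : R) :
    (ascPochhammer R n).eval r = ∏ i ∈ range n, (r + i) := by
  induction n with
  | zero => simp
  | succ n ih => simp [ascPochhammer_succ_right, ih, prod_range_succ]

theorem Ring.choose_add_natCast_sub_one_eq {K : Type*} [Field K] [CharZero K] (a : K) (n : ℕ) :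
    Ring.choose (a + n - 1) n = (∏ i ∈ range n, (a + i)) / n.factorial := by
  rw [Ring.choose_eq_smul, Polynomial.descPochhammer_smeval_eq_ascPochhammer,
    show a + n - 1 - n + 1 = a by ring, Polynomial.ascPochhammer_smeval_eq_eval,
    ascPochhammer_eval_eq_prod_range, smul_eq_mul, div_eq_inv_mul]

theorem Real.hasSum_prod_range_add_div_factorial_mul_pow (a : ℝ) {x : ℝ} (hx : |x| < 1) :
    HasSum (fun n => (∏ i ∈ range n, (a + i)) / n.factorial * x ^ n) ((1 - x) ^ (-a)) := by
  have h := (Real.one_div_one_sub_rpow_hasFPowerSeriesOnBall_zero a).hasSum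
    (y := x) (by simpa [enorm_eq_nnnorm, ← NNReal.coe_lt_coe] using hx)
  rw [FormalMultilinearSeries.ofScalars_apply_eq', zero_add] at h
  rw [Real.rpow_neg (by linarith [(abs_lt.mp hx).2]), ← one_div]
  simpa only [Ring.choose_add_natCast_sub_one_eq, smul_eq_mul] using h

theorem norm_prod_range_add_natCast_le {R : Type*} [NormedCommRing R] [NormOneClass R]
    (r : R) (n : ℕ) : ‖∏ i ∈ range n, (r + i)‖ ≤ ∏ i ∈ range n, (‖r‖ + i) := by
  refine (Finset.norm_prod_le _ _).trans (prod_le_prod (fun _ _ => norm_nonneg _) fun i _ => ?_)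
  calc ‖r + i‖ ≤ ‖r‖ + ‖(i : R)‖ := norm_add_le _ _
    _ ≤ ‖r‖ + i := by simpa using Nat.norm_cast_le (α := R) i

theorem Real.summable_natCast_add_one_rpow_neg {σ : ℝ} (hσ : 1 < σ) :
    Summable fun m : ℕ => ((m : ℝ) + 1) ^ (-σ) := by
  have h := (summable_nat_add_iff 1).mpr (Real.summable_nat_rpow.mpr (neg_lt_neg hσ))
  simpa only [Nat.cast_add, Nat.cast_one] using h

theorem norm_natCast_add_cpow_neg_add_le {k : ℝ} (hk : 1 ≤ k) {s : ℂ} (hs : 0 ≤ s.re)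
    (m n : ℕ) : ‖((m : ℂ) + k) ^ (-(s + n))‖ ≤ k⁻¹ ^ n * ((m : ℝ) + 1) ^ (-s.re) := by
  have hmk : 0 < (m : ℝ) + k := by positivity
  have hk_le : k ≤ (m : ℝ) + k := le_add_of_nonneg_left m.cast_nonneg
  have h1 : ((m : ℝ) + k) ^ (-s.re) ≤ ((m : ℝ) + 1) ^ (-s.re) :=
    Real.rpow_le_rpow_of_nonpos (by positivity) (by linarith) (neg_nonpos.mpr hs)
  have h2 : ((m : ℝ) + k) ^ (-(n : ℝ)) ≤ k⁻¹ ^ n := by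
    rw [Real.rpow_neg hmk.le, Real.rpow_natCast, ← inv_pow]
    gcongr
  have hre : (-(s + n)).re = -s.re + -(n : ℝ) := by simp [add_comm]
  rw [show ((m : ℂ) + k) = (((m : ℝ) + k : ℝ) : ℂ) by push_cast; rfl,
    Complex.norm_cpow_eq_rpow_re_of_pos hmk, hre, Real.rpow_add hmk, mul_comm]
  gcongr

theorem norm_zetaShift_add_natCast_le {k : ℕ} (hk : 1 ≤ k) {s : ℂ} (hs : 1 < s.re) (n : ℕ) :
    ‖zetaShift k (s + n)‖ ≤ (k : ℝ)⁻¹ ^ n * ∑' m : ℕ, ((m : ℝ) + 1) ^ (-s.re) := by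
  have hterm := norm_natCast_add_cpow_neg_add_le (Nat.one_le_cast.mpr hk) (by linarith) (n := n)
  have hmaj := (Real.summable_natCast_add_one_rpow_neg hs).mul_left ((k : ℝ)⁻¹ ^ n)
  have hnorm := Summable.of_nonneg_of_le (fun _ => norm_nonneg _) hterm hmaj
  calc ‖zetaShift k (s + n)‖ ≤ ∑' m : ℕ, ‖((m : ℂ) + k) ^ (-(s + n))‖ :=
        norm_tsum_le_tsum_norm hnorm
    _ ≤ ∑' m : ℕ, (k : ℝ)⁻¹ ^ n * ((m : ℝ) + 1) ^ (-s.re) := hnorm.tsum_le_tsum hterm hmaj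
    _ = _ := tsum_mul_left

theorem norm_bCoeff_le {k : ℕ} (hk : 1 ≤ k) {s : ℂ} (hs : 1 < s.re) (n : ℕ) :
    ‖bCoeff k s n‖ ≤ (∑' m : ℕ, ((m : ℝ) + 1) ^ (-s.re)) *
      ((∏ i ∈ range n, (‖s‖ + i)) / n.factorial * (k : ℝ)⁻¹ ^ n) := by
  have hprod := norm_prod_range_add_natCast_le s n
  have hzeta := norm_zetaShift_add_natCast_le hk hs n
  rw [bCoeff, norm_mul, norm_mul, norm_div, norm_pow, norm_neg, norm_one, one_pow,
    Complex.norm_natCast]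
  calc 1 / (n.factorial : ℝ) * ‖∏ i ∈ range n, (s + i)‖ * ‖zetaShift k (s + n)‖
      ≤ 1 / (n.factorial : ℝ) * (∏ i ∈ range n, (‖s‖ + i)) *
          ((k : ℝ)⁻¹ ^ n * ∑' m : ℕ, ((m : ℝ) + 1) ^ (-s.re)) := by gcongr
    _ = _ := by ring

/-- For fixed `k ≥ 1`, fixed `s` with `Re s > 1` and `0 ≤ β < k`, the power series
`∑ b_{n,k}(s) α^n` converges absolutely for `|α| ≤ β` and is bounded by
`ζ(Re s) (1 - β/k)^{-|s|}`. -/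
theorem bCoeff_series_bound (k : ℕ) (hk : 1 ≤ k) (s : ℂ) (hs : 1 < s.re) (β : ℝ)
    (hβ0 : 0 ≤ β) (hβ : β < k) (α : ℂ) (hα : ‖α‖ ≤ β) :
    Summable (fun n : ℕ => ‖bCoeff k s n * α ^ n‖) ∧
      ‖∑' n : ℕ, bCoeff k s n * α ^ n‖ ≤
        (∑' n : ℕ, ((n : ℝ) + 1) ^ (-s.re)) * (1 - β / k) ^ (-‖s‖) := by
  set Z := ∑' n : ℕ, ((n : ℝ) + 1) ^ (-s.re)
  set c : ℕ → ℝ := fun n => (∏ i ∈ range n, (‖s‖ + i)) / n.factorial * (β / k) ^ n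
  have hk0 : (0 : ℝ) < k := by exact_mod_cast hk
  have hc : HasSum c ((1 - β / k) ^ (-‖s‖)) :=
    Real.hasSum_prod_range_add_div_factorial_mul_pow _ <| abs_lt.mpr
      ⟨by linarith [div_nonneg hβ0 hk0.le], (div_lt_one hk0).mpr hβ⟩
  have hbound (n : ℕ) : ‖bCoeff k s n * α ^ n‖ ≤ Z * c n := by
    calc ‖bCoeff k s n * α ^ n‖ = ‖bCoeff k s n‖ * ‖α‖ ^ n := by rw [norm_mul, norm_pow]
      _ ≤ Z * ((∏ i ∈ range n, (‖s‖ + i)) / n.factorial * (k : ℝ)⁻¹ ^ n) * β ^ n := by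
          gcongr
          exact norm_bCoeff_le hk hs n
      _ = Z * c n := by simp only [c, div_eq_mul_inv, mul_pow]; ring
  have hsum := Summable.of_nonneg_of_le (fun _ => norm_nonneg _) hbound (hc.summable.mul_left Z)
  refine ⟨hsum, ?_⟩
  calc ‖∑' n : ℕ, bCoeff k s n * α ^ n‖ ≤ ∑' n : ℕ, ‖bCoeff k s n * α ^ n‖ :=
        norm_tsum_le_tsum_norm hsum
    _ ≤ ∑' n : ℕ, Z * c n := hsum.tsum_le_tsum hbound (hc.summable.mul_left Z)
    _ = Z * (1 - β / k) ^ (-‖s‖) := by rw [tsum_mul_left, hc.tsum_eq]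
end

section
/- For every complex s with Re(s) > 1, (1 − 2^{1-s}) ζ(s) = ∑_{n≥1} [s(s+1)⋯(s+n-1)/(2^{s+n} n!)] · ζ(s+n). -/
/-!
Split `ζ(s)` into odd and even terms: `(1 - 2^{1-s}) ζ(s) = ∑ₖ ((2k+1)^{-s} - (2k+2)^{-s})`.
With `m = 2k+2`, the binomial series gives
`(m-1)^{-s} = m^{-s} (1 - 1/m)^{-s} = ∑ₙ (s)ₙ/n! · m^{-s-n}`, so each term is
`∑_{n≥1} (s)ₙ/n! · m^{-s-n}`. Since `m ≥ 2` and `∑ₙ |(s)ₙ/n!| 2^{-n} < ∞`, the double series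
converges absolutely, and summing over `k` first gives `(s)ₙ/n! · 2^{-s-n} ζ(s+n)`.
-/

open Complex Finset
open scoped Nat

theorem Ring.multichoose_eq_prod_div_factorial {K : Type*} [Field K] [CharZero K] (a : K) (n : ℕ) :
    Ring.multichoose a n = (∏ i ∈ range n, (a + i)) / n ! := by
  rw [eq_div_iff (by simp [n.factorial_ne_zero]), mul_comm, ← nsmul_eq_mul,
    Ring.factorial_nsmul_multichoose_eq_ascPochhammer, Polynomial.ascPochhammer_smeval_eq_eval]
  induction n with
  | zero => simp
  | succ n ih => rw [ascPochhammer_succ_eval, ih, prod_range_succ]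

namespace Complex

theorem hasFPowerSeriesOnBall_one_sub_cpow_neg (a : ℂ) :
    HasFPowerSeriesOnBall (fun z ↦ (1 - z) ^ (-a))
      (.ofScalars ℂ (Ring.multichoose a ·)) 0 1 := by
  simpa [Ring.multichoose_eq, cpow_neg] using one_div_one_sub_cpow_hasFPowerSeriesOnBall_zero a

theorem hasSum_multichoose_mul_pow (a : ℂ) {z : ℂ} (hz : ‖z‖ < 1) :
    HasSum (fun n ↦ Ring.multichoose a n * z ^ n) ((1 - z) ^ (-a)) := by
  simpa [FormalMultilinearSeries.ofScalars_apply_eq, mul_comm] using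
    (hasFPowerSeriesOnBall_one_sub_cpow_neg a).hasSum (y := z)
      (by simpa [← ofReal_norm] using ENNReal.ofReal_lt_one.2 hz)

theorem summable_norm_multichoose_mul_pow (a : ℂ) {r : ℝ} (hr₀ : 0 ≤ r) (hr : r < 1) :
    Summable fun n ↦ ‖Ring.multichoose a n‖ * r ^ n := by
  have hradius := (hasFPowerSeriesOnBall_one_sub_cpow_neg a).r_le
  have hr' : (r.toNNReal : ENNReal) < 1 := by simpa using hr
  simpa [FormalMultilinearSeries.ofScalars_norm, hr₀] using
    FormalMultilinearSeries.summable_norm_mul_pow _ (hr'.trans_le hradius)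

theorem cpow_neg_add_natCast {x : ℂ} (hx : x ≠ 0) (s : ℂ) (n : ℕ) :
    x ^ (-(s + n)) = x ^ (-s) * (x ^ n)⁻¹ := by
  rw [neg_add, cpow_add _ _ hx, cpow_neg x n, cpow_natCast]

theorem hasSum_multichoose_mul_cpow (s : ℂ) {m : ℝ} (hm : 1 < m) :
    HasSum (fun n : ℕ ↦ Ring.multichoose s (n + 1) * (m : ℂ) ^ (-(s + (n + 1))))
      (((m - 1 : ℝ) : ℂ) ^ (-s) - (m : ℂ) ^ (-s)) := by
  have hm₀ : (m : ℂ) ≠ 0 := ofReal_ne_zero.2 (by linarith)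
  have hx : ‖(m : ℂ)⁻¹‖ < 1 := by
    rw [norm_inv, norm_real, Real.norm_of_nonneg (by linarith)]
    exact inv_lt_one_of_one_lt₀ hm
  have htail := ((hasSum_nat_add_iff' 1).2 (hasSum_multichoose_mul_pow s hx)).mul_right
    ((m : ℂ) ^ (-s))
  have hsum : ((1 - (m : ℂ)⁻¹) ^ (-s) - 1) * (m : ℂ) ^ (-s)
      = ((m - 1 : ℝ) : ℂ) ^ (-s) - (m : ℂ) ^ (-s) := by
    have hsplit : ((m - 1 : ℝ) : ℂ) = ((1 - m⁻¹ : ℝ) : ℂ) * (m : ℂ) := by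
      push_cast; field_simp
    rw [hsplit, mul_cpow_ofReal_nonneg (sub_nonneg.2 (inv_le_one_of_one_le₀ hm.le)) (by linarith)]
    push_cast; ring
  simp only [Ring.multichoose_zero_right, pow_zero, mul_one, Finset.range_one,
    Finset.sum_singleton, hsum] at htail
  refine htail.congr_fun fun n ↦ ?_
  rw [← Nat.cast_add_one, cpow_neg_add_natCast hm₀, inv_pow]
  ring

theorem norm_cpow_neg_add_le {m : ℝ} (hm : 2 ≤ m) (s : ℂ) (n : ℕ) :
    ‖(m : ℂ) ^ (-(s + (n + 1)))‖ ≤ ‖(m : ℂ) ^ (-s)‖ * (1 / 2) ^ (n + 1) := by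
  rw [← Nat.cast_add_one, cpow_neg_add_natCast (ofReal_ne_zero.2 (by linarith)), norm_mul,
    norm_inv, norm_pow, norm_real, Real.norm_of_nonneg (by linarith), ← inv_pow, one_div]
  gcongr

theorem summable_uncurry_multichoose_mul_cpow (s : ℂ) {m : ℕ → ℝ} (hm : ∀ k, 2 ≤ m k)
    (hsum : Summable fun k ↦ ‖(m k : ℂ) ^ (-s)‖) :
    Summable (Function.uncurry fun n k ↦
      Ring.multichoose s (n + 1) * (m k : ℂ) ^ (-(s + (n + 1)))) := by
  have hcoeff : Summable fun n ↦ ‖Ring.multichoose s (n + 1)‖ * (1 / 2 : ℝ) ^ (n + 1) :=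
    (summable_nat_add_iff 1).2 (summable_norm_multichoose_mul_pow s (by norm_num) (by norm_num))
  refine .of_norm_bounded (hcoeff.mul_of_nonneg hsum (fun _ ↦ by positivity)
    (fun _ ↦ norm_nonneg _)) fun ⟨n, k⟩ ↦ ?_
  rw [Function.uncurry_apply_pair, norm_mul, mul_right_comm, mul_assoc]
  gcongr
  exact norm_cpow_neg_add_le (hm k) s n

end Complex

theorem hasSum_nat_add_one_cpow_neg {w : ℂ} (hw : 1 < w.re) :
    HasSum (fun n : ℕ ↦ ((n + 1 : ℝ) : ℂ) ^ (-w)) (riemannZeta w) := by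
  rw [zeta_eq_tsum_one_div_nat_add_one_cpow hw]
  have hsum : Summable fun n : ℕ ↦ 1 / ((n : ℂ) + 1) ^ w := by
    simpa using (summable_nat_add_iff 1).2 (Complex.summable_one_div_nat_cpow.2 hw)
  refine hsum.hasSum.congr_fun fun n ↦ ?_
  push_cast
  rw [cpow_neg, one_div]

theorem hasSum_two_mul_add_two_cpow_neg {w : ℂ} (hw : 1 < w.re) :
    HasSum (fun k : ℕ ↦ ((2 * k + 2 : ℝ) : ℂ) ^ (-w)) (2 ^ (-w) * riemannZeta w) := by
  refine ((hasSum_nat_add_one_cpow_neg hw).mul_left (2 ^ (-w))).congr_fun fun k ↦ ?_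
  rw [show (2 * k + 2 : ℝ) = 2 * (k + 1) by ring, Complex.ofReal_mul,
    mul_cpow_ofReal_nonneg (by norm_num) (by positivity)]
  norm_num

theorem hasSum_alternating_cpow_neg {s : ℂ} (hs : 1 < s.re) :
    HasSum (fun k : ℕ ↦ ((2 * k + 1 : ℝ) : ℂ) ^ (-s) - ((2 * k + 2 : ℝ) : ℂ) ^ (-s))
      ((1 - 2 ^ (1 - s)) * riemannZeta s) := by
  set g : ℕ → ℂ := fun n ↦ ((n + 1 : ℝ) : ℂ) ^ (-s)
  have hg : HasSum g (riemannZeta s) := hasSum_nat_add_one_cpow_neg hs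
  have hodd : HasSum (fun k ↦ g (2 * k + 1)) (2 ^ (-s) * riemannZeta s) :=
    (hasSum_two_mul_add_two_cpow_neg hs).congr_fun fun k ↦ by simp only [g]; push_cast; ring_nf
  obtain ⟨a, heven⟩ := hg.summable.comp_injective (mul_right_injective₀ two_ne_zero)
  have ha : a = riemannZeta s - 2 ^ (-s) * riemannZeta s :=
    eq_sub_of_add_eq ((heven.even_add_odd hodd).unique hg)
  have htwo : (2 : ℂ) ^ (1 - s) = 2 * 2 ^ (-s) := by
    rw [sub_eq_add_neg, cpow_add _ _ two_ne_zero, cpow_one]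
  rw [htwo, show (1 - 2 * 2 ^ (-s)) * riemannZeta s = a - 2 ^ (-s) * riemannZeta s by
    rw [ha]; ring]
  refine (heven.sub hodd).congr_fun fun k ↦ ?_
  simp only [g, Function.comp_apply]
  push_cast
  ring_nf

/-- Ramaswami's identity: for `Re s > 1`,
`(1 − 2^{1-s}) ζ(s) = ∑_{n≥1} [s(s+1)⋯(s+n-1)/(2^{s+n} n!)] ζ(s+n)`. -/
theorem ramaswami_identity (s : ℂ) (hs : 1 < s.re) :
    (1 - (2 : ℂ) ^ (1 - s)) * riemannZeta s =
      ∑' n : ℕ, (∏ i ∈ Finset.range (n + 1), (s + i)) /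
        ((2 : ℂ) ^ (s + (n + 1)) * ((n + 1).factorial : ℂ)) * riemannZeta (s + (n + 1)) := by
  set m : ℕ → ℝ := fun k ↦ 2 * k + 2
  have hm (k : ℕ) : 2 ≤ m k := by simp [m]
  set T : ℕ → ℕ → ℂ := fun n k ↦ Ring.multichoose s (n + 1) * (m k : ℂ) ^ (-(s + (n + 1)))
  have hT : Summable (Function.uncurry T) :=
    Complex.summable_uncurry_multichoose_mul_cpow s hm
      (summable_norm_iff.2 (hasSum_two_mul_add_two_cpow_neg hs).summable)
  have hrow (k : ℕ) : HasSum (fun n ↦ T n k)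
      (((2 * k + 1 : ℝ) : ℂ) ^ (-s) - ((2 * k + 2 : ℝ) : ℂ) ^ (-s)) := by
    have h := Complex.hasSum_multichoose_mul_cpow s (by linarith [hm k] : 1 < m k)
    rwa [show m k - 1 = 2 * k + 1 by simp only [m]; ring] at h
  have hcol (n : ℕ) : HasSum (fun k ↦ T n k)
      ((∏ i ∈ Finset.range (n + 1), (s + i)) /
        ((2 : ℂ) ^ (s + (n + 1)) * ((n + 1).factorial : ℂ)) * riemannZeta (s + (n + 1))) := by
    have hre : 1 < (s + (n + 1)).re := by simp only [add_re, natCast_re, one_re]; linarith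
    have h := (hasSum_two_mul_add_two_cpow_neg hre).mul_left (Ring.multichoose s (n + 1))
    have hcoeff : Ring.multichoose s (n + 1) * (2 ^ (-(s + (n + 1))) * riemannZeta (s + (n + 1)))
        = (∏ i ∈ Finset.range (n + 1), (s + i)) /
          ((2 : ℂ) ^ (s + (n + 1)) * ((n + 1).factorial : ℂ)) * riemannZeta (s + (n + 1)) := by
      rw [Ring.multichoose_eq_prod_div_factorial, cpow_neg]
      ring
    rwa [hcoeff] at h
  rw [← (hasSum_alternating_cpow_neg hs).tsum_eq, tsum_congr fun k ↦ (hrow k).tsum_eq.symm,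
    hT.tsum_comm]
  exact tsum_congr fun n ↦ (hcol n).tsum_eq
end

section
/- For every complex s with Re(s) > 1, ∑_{n≥1} [s(s+1)⋯(s+n-1)/n!] · (ζ(s+n) − 1) = 1. -/
/-!
Write `ζ(s + n) - 1 = ∑_{m ≥ 2} m^{-s-n}` and let `c_n = s(s+1)⋯(s+n-1)/n! = choose (s+n-1) n`.
For fixed `m`, the binomial series `∑_n c_n x^n = (1 - x)^{-s}` at `x = 1/m` gives
`∑_n c_n m^{-s-n} = m^{-s} (1 - 1/m)^{-s} = (m - 1)^{-s}`, so summing the double series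
`∑_{n ≥ 0} ∑_{m ≥ 2} c_n m^{-s-n}` the other way round yields `ζ(s)`. It converges absolutely,
being dominated by `∑_n |c_n| 2^{-n} · ∑_m m^{-Re s}`. Its `n = 0` row is `ζ(s) - 1`, and the
remaining rows sum to `1`.
-/

open Complex Finset

theorem Ring.choose_add_sub_one_eq_prod_div {K : Type*} [Field K] [CharZero K] (s : K) (n : ℕ) :
    Ring.choose (s + n - 1) n = (∏ i ∈ range n, (s + i)) / n.factorial := by
  rw [Ring.choose_eq_smul, smul_eq_mul, inv_mul_eq_div,
    Polynomial.descPochhammer_smeval_eq_ascPochhammer, Polynomial.ascPochhammer_smeval_eq_eval,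
    show s + n - 1 - n + 1 = s by ring, ascPochhammer_eval_eq_prod_range]

theorem Complex.hasSum_choose_mul_pow (s : ℂ) {x : ℂ} (hx : ‖x‖ < 1) :
    HasSum (fun n : ℕ => Ring.choose (s + n - 1) n * x ^ n) (1 / (1 - x) ^ s) := by
  have hx' : x ∈ Metric.eball (0 : ℂ) 1 := by
    rw [Metric.mem_eball, edist_zero_right, ← ofReal_norm, ENNReal.ofReal_lt_one]; exact hx
  simpa [FormalMultilinearSeries.ofScalars_apply_eq, mul_comm] using
    (one_div_one_sub_cpow_hasFPowerSeriesOnBall_zero s).hasSum hx'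

theorem Complex.one_div_cpow_add_natCast {t : ℂ} (ht : t ≠ 0) (s : ℂ) (n : ℕ) :
    1 / t ^ (s + n) = (1 / t) ^ n * (1 / t ^ s) := by
  rw [cpow_add _ _ ht, cpow_natCast, one_div_pow, one_div_mul_one_div, mul_comm]

theorem Complex.hasSum_choose_div_cpow_add (s : ℂ) {t : ℝ} (ht : 1 < t) :
    HasSum (fun n : ℕ => Ring.choose (s + n - 1) n / (t : ℂ) ^ (s + n))
      (1 / ((t - 1 : ℝ) : ℂ) ^ s) := by
  have ht₀ : t ≠ 0 := by positivity
  have hx : ‖1 / (t : ℂ)‖ < 1 := by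
    rw [norm_div, norm_one, norm_real, Real.norm_of_nonneg (by positivity)]
    exact (div_lt_one (by positivity)).mpr ht
  have hpow : (1 - 1 / (t : ℂ)) ^ s * (t : ℂ) ^ s = ((t - 1 : ℝ) : ℂ) ^ s := calc
    _ = ((1 - 1 / t : ℝ) : ℂ) ^ s * (t : ℂ) ^ s := by push_cast; rfl
    _ = (((1 - 1 / t) * t : ℝ) : ℂ) ^ s := by
      rw [ofReal_mul, mul_cpow_ofReal_nonneg _ (by positivity)]
      rw [sub_nonneg, div_le_one (by positivity)]; exact ht.le
    _ = ((t - 1 : ℝ) : ℂ) ^ s := by rw [sub_mul, one_div_mul_cancel ht₀, one_mul]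
  have hbinom := (hasSum_choose_mul_pow s hx).mul_right (1 / (t : ℂ) ^ s)
  rw [one_div_mul_one_div, hpow] at hbinom
  refine hbinom.congr_fun fun n => ?_
  rw [div_eq_mul_one_div, one_div_cpow_add_natCast (ofReal_ne_zero.mpr ht₀), mul_assoc]

theorem hasSum_one_div_nat_add_two_cpow {w : ℂ} (hw : 1 < w.re) :
    HasSum (fun k : ℕ => 1 / ((k : ℂ) + 2) ^ w) (riemannZeta w - 1) := by
  have h := ((summable_one_div_nat_cpow.mpr hw).hasSum_iff.mpr
    (zeta_eq_tsum_one_div_nat_cpow hw).symm)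
  rw [← hasSum_nat_add_iff' 2] at h
  simpa [sum_range_succ, zero_cpow (ne_zero_of_one_lt_re hw)] using h

theorem summable_prod_mul_pow_mul {𝕜 : Type*} [NormedField 𝕜] [CompleteSpace 𝕜]
    {c x y : ℕ → 𝕜} {r : ℝ} (hc : Summable fun n => ‖c n‖ * r ^ n) (hx : ∀ k, ‖x k‖ ≤ r)
    (hy : Summable fun k => ‖y k‖) :
    Summable fun p : ℕ × ℕ => c p.1 * x p.2 ^ p.1 * y p.2 := by
  have hr : 0 ≤ r := (norm_nonneg _).trans (hx 0)
  refine (hc.mul_of_nonneg hy (fun n => by positivity) (fun k => norm_nonneg _)).of_norm_bounded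
    fun p => ?_
  rw [norm_mul, norm_mul, norm_pow]
  gcongr
  exact hx p.2

theorem summable_choose_div_nat_add_two_cpow {s : ℂ} (hs : 1 < s.re) :
    Summable fun p : ℕ × ℕ => Ring.choose (s + p.1 - 1) p.1 / ((p.2 : ℂ) + 2) ^ (s + p.1) := by
  have hc : Summable fun n : ℕ => ‖Ring.choose (s + n - 1) n‖ * (1 / 2 : ℝ) ^ n := by
    have h := (hasSum_choose_mul_pow s (x := 1 / 2) (by norm_num)).summable
    refine (summable_norm_iff.mpr h).congr fun n => ?_
    rw [norm_mul, norm_pow, norm_div, norm_one, Complex.norm_two]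
  have hx (k : ℕ) : ‖1 / ((k : ℂ) + 2)‖ ≤ 1 / 2 := by
    rw [norm_div, norm_one, ← Nat.cast_ofNat, ← Nat.cast_add, norm_natCast]
    gcongr
    simp
  have hy := summable_norm_iff.mpr (hasSum_one_div_nat_add_two_cpow hs).summable
  refine (summable_prod_mul_pow_mul hc hx hy).congr fun p => ?_
  rw [div_eq_mul_one_div (Ring.choose _ _), one_div_cpow_add_natCast (by norm_cast), mul_assoc]

theorem hasSum_choose_mul_riemannZeta_sub_one {s : ℂ} (hs : 1 < s.re) :
    HasSum (fun n : ℕ => Ring.choose (s + n - 1) n * (riemannZeta (s + n) - 1))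
      (riemannZeta s) := by
  have hF := summable_choose_div_nat_add_two_cpow hs
  have hrows (n : ℕ) : HasSum (fun k : ℕ => Ring.choose (s + n - 1) n / ((k : ℂ) + 2) ^ (s + n))
      (Ring.choose (s + n - 1) n * (riemannZeta (s + n) - 1)) := by
    have hre : 1 < (s + n).re := by simp only [add_re, natCast_re]; linarith [n.cast_nonneg (α := ℝ)]
    simpa only [mul_one_div] using (hasSum_one_div_nat_add_two_cpow hre).mul_left _
  have hcols (k : ℕ) : HasSum (fun n : ℕ => Ring.choose (s + n - 1) n / ((k : ℂ) + 2) ^ (s + n))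
      (1 / ((k : ℂ) + 1) ^ s) := by
    have h := hasSum_choose_div_cpow_add s (t := k + 2) (by linarith [k.cast_nonneg (α := ℝ)])
    push_cast at h
    rwa [add_sub_assoc, show (2 : ℂ) - 1 = 1 by norm_num] at h
  have hζ := hF.hasSum.prod_fiberwise hrows
  have hζ' := ((Equiv.prodComm ℕ ℕ).hasSum_iff.mpr hF.hasSum).prod_fiberwise hcols
  rwa [← hζ'.tsum_eq, ← zeta_eq_tsum_one_div_nat_add_one_cpow hs] at hζ

/-- For `Re s > 1`, `∑_{n≥1} [s(s+1)⋯(s+n-1)/n!] (ζ(s+n) − 1) = 1`. -/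
theorem zeta_series_eq_one (s : ℂ) (hs : 1 < s.re) :
    ∑' n : ℕ, (∏ i ∈ Finset.range (n + 1), (s + i)) / ((n + 1).factorial : ℂ) *
      (riemannZeta (s + (n + 1)) - 1) = 1 := by
  have h := (hasSum_nat_add_iff' 1).mpr (hasSum_choose_mul_riemannZeta_sub_one hs)
  simp only [Ring.choose_add_sub_one_eq_prod_div, sum_range_one] at h
  push_cast at h
  simpa using h.tsum_eq
end

section
/- Euler's constant γ satisfies ∑_{n≥2} (ζ(n) − 1)/n = 1 − γ, where the series converges. -/
open Complex

noncomputable def gaux (m n : ℕ) : ℝ := (1 / ((m : ℝ) + 2)) ^ (n + 2) / ((n : ℝ) + 2)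

lemma gaux_nonneg (m n : ℕ) : 0 ≤ gaux m n := by
  unfold gaux; positivity

lemma hasSum_gaux (m : ℕ) :
    HasSum (fun n ↦ gaux m n)
      (Real.log ((m : ℝ) + 2) - Real.log ((m : ℝ) + 1) - 1 / ((m : ℝ) + 2)) := by
  set x : ℝ := 1 / ((m : ℝ) + 2) with hx
  have hx0 : (0:ℝ) < (m : ℝ) + 2 := by positivity
  have hxlt : |x| < 1 := by
    rw [abs_of_pos (by positivity)]
    rw [hx, div_lt_one hx0]; linarith
  have h := Real.hasSum_pow_div_log_of_abs_lt_one hxlt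
  have h2 : HasSum (fun n : ℕ ↦ x ^ (n + 1 + 1) / (((n + 1 : ℕ):ℝ) + 1))
      (-Real.log (1 - x) - x) := by
    rw [hasSum_nat_add_iff (f := fun n : ℕ ↦ x ^ (n + 1) / ((n:ℝ) + 1)) 1]
    simpa using h
  have hlog : -Real.log (1 - x) - x
      = Real.log ((m : ℝ) + 2) - Real.log ((m : ℝ) + 1) - x := by
    have h1x : 1 - x = ((m : ℝ) + 1) / ((m : ℝ) + 2) := by
      rw [hx]; field_simp; ring
    rw [h1x, Real.log_div (by positivity) (by positivity)]
    ring
  rw [hlog] at h2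
  convert h2 using 2 with n
  · unfold gaux; push_cast; simp only [hx]; ring_nf

lemma hasSum_telescope :
    HasSum (fun m : ℕ ↦ Real.log ((m : ℝ) + 2) - Real.log ((m : ℝ) + 1) - 1 / ((m : ℝ) + 2))
      (1 - Real.eulerMascheroniConstant) := by
  have h := ZetaAsymptotics.term_tsum_one
  have he : (fun m : ℕ ↦ ZetaAsymptotics.term (m + 1) 1)
      = fun m : ℕ ↦ Real.log ((m : ℝ) + 2) - Real.log ((m : ℝ) + 1) - 1 / ((m : ℝ) + 2) := by
    funext m
    rw [ZetaAsymptotics.term_one (Nat.succ_pos m)]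
    push_cast; ring
  rwa [he] at h

lemma summable_inner (n : ℕ) : Summable (fun m : ℕ ↦ (1 / ((m : ℝ) + 2)) ^ (n + 2)) := by
  have h : Summable (fun m : ℕ ↦ 1 / ((m : ℝ)) ^ (n + 2)) := by
    rw [Real.summable_one_div_nat_pow]
    omega
  have := (summable_nat_add_iff (f := fun m : ℕ ↦ 1 / ((m : ℝ)) ^ (n + 2)) 2).mpr h
  refine this.congr fun m ↦ ?_
  push_cast
  rw [div_pow, one_pow]

noncomputable def Saux (n : ℕ) : ℝ := ∑' m : ℕ, (1 / ((m : ℝ) + 2)) ^ (n + 2)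

lemma zeta_term_eq (n : ℕ) :
    (riemannZeta (n + 2) - 1) / ((n : ℂ) + 2) = ((Saux n / ((n : ℝ) + 2) : ℝ) : ℂ) := by
  have hre : 1 < ((n : ℂ) + 2).re := by
    simp only [add_re, natCast_re, re_ofNat]
    have : (0:ℝ) ≤ (n : ℝ) := Nat.cast_nonneg n
    linarith
  have hz := zeta_eq_tsum_one_div_nat_add_one_cpow hre
  have hcast : ((n : ℂ) + 2) = ((n + 2 : ℕ) : ℂ) := by push_cast; ring
  have hS : HasSum (fun m : ℕ ↦ (1 / ((m : ℝ) + 2)) ^ (n + 2)) (Saux n) :=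
    (summable_inner n).hasSum
  have hSC : HasSum (fun m : ℕ ↦ (1 : ℂ) / ((m : ℂ) + 2) ^ (n + 2)) ((Saux n : ℝ) : ℂ) := by
    have h1 := Complex.hasSum_ofReal.mpr hS
    have heq : (fun m : ℕ ↦ (((1 / ((m : ℝ) + 2)) ^ (n + 2) : ℝ) : ℂ))
        = fun m : ℕ ↦ (1 : ℂ) / ((m : ℂ) + 2) ^ (n + 2) := by
      funext m; push_cast; rw [div_pow, one_pow]
    rwa [heq] at h1
  have hC : HasSum (fun k : ℕ ↦ (1 : ℂ) / ((k : ℂ) + 1) ^ (n + 2))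
      (((Saux n : ℝ) : ℂ) + 1) := by
    have heq : (fun m : ℕ ↦ (1 : ℂ) / (((m + 1 : ℕ) : ℂ) + 1) ^ (n + 2))
        = fun m : ℕ ↦ (1 : ℂ) / ((m : ℂ) + 2) ^ (n + 2) := by
      funext m; push_cast; ring_nf
    have := (hasSum_nat_add_iff (f := fun k : ℕ ↦ (1 : ℂ) / ((k : ℂ) + 1) ^ (n + 2)) 1).mp
      (by rw [heq]; exact hSC)
    simpa using this
  have hzeta : riemannZeta ((n : ℂ) + 2) = ((Saux n : ℝ) : ℂ) + 1 := by
    rw [hz]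
    simp_rw [hcast, cpow_natCast]
    exact hC.tsum_eq
  rw [hzeta]
  push_cast
  ring

/-- `∑_{n≥2} (ζ(n) − 1)/n = 1 − γ`, where `γ` is the Euler–Mascheroni constant. -/
theorem tsum_zeta_sub_one_div : ∑' n : ℕ, (riemannZeta (n + 2) - 1) / ((n : ℂ) + 2) =
    1 - (Real.eulerMascheroniConstant : ℂ) := by
  have hsum_uncurry : Summable (Function.uncurry gaux) :=
    (summable_prod_of_nonneg (fun p ↦ gaux_nonneg p.1 p.2)).mpr
      ⟨fun m ↦ (hasSum_gaux m).summable,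
        hasSum_telescope.summable.congr fun m ↦ ((hasSum_gaux m).tsum_eq).symm⟩
  have hreal : ∑' n : ℕ, Saux n / ((n : ℝ) + 2) = 1 - Real.eulerMascheroniConstant := by
    calc ∑' n : ℕ, Saux n / ((n : ℝ) + 2) = ∑' n : ℕ, ∑' m : ℕ, gaux m n := by
          refine tsum_congr fun n ↦ ?_
          rw [Saux, ← tsum_div_const]
          rfl
      _ = ∑' m : ℕ, ∑' n : ℕ, gaux m n := Summable.tsum_comm hsum_uncurry
      _ = ∑' m : ℕ, (Real.log ((m : ℝ) + 2) - Real.log ((m : ℝ) + 1) - 1 / ((m : ℝ) + 2)) :=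
          tsum_congr fun m ↦ (hasSum_gaux m).tsum_eq
      _ = 1 - Real.eulerMascheroniConstant := hasSum_telescope.tsum_eq
  calc ∑' n : ℕ, (riemannZeta (n + 2) - 1) / ((n : ℂ) + 2)
      = ∑' n : ℕ, ((Saux n / ((n : ℝ) + 2) : ℝ) : ℂ) := tsum_congr zeta_term_eq
    _ = ((∑' n : ℕ, Saux n / ((n : ℝ) + 2) : ℝ) : ℂ) := (Complex.ofReal_tsum _).symm
    _ = 1 - (Real.eulerMascheroniConstant : ℂ) := by rw [hreal]; push_cast; ring
end
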